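/- arXiv:2508.20147 — 2 statements merged into one kernel-verified Lean document; each statement's English description precedes it below -/
import Mathlib

section
/- With β_f(u) = c⁻²(c·n_f·u⁰ - j_f·u), where n_f = ∫f dv and j_f = ∫(c v/v⁰)f(v)dv, the diffusion scalar Φ_f = (c²μ/3)(1 - ∫ c·f(u)/(β_f(u)·u⁰) du) satisfies 0 ≤ Φ_f ≤ c²μ/3, for any nonnegative integrable f with suitable finite moments and μ > 0. -/
open Finset MeasureTheory

set_option maxHeartbeats 1000000 in
theorem diffusion_scalar_bounds (c μ : ℝ) (hc : 0 < c) (hμ : 0 < μ)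
    (f : (Fin 3 → ℝ) → ℝ) (hf0 : ∀ u, 0 ≤ f u)
    (hf : Integrable f)
    (hf1 : Integrable fun u => ‖u‖ * f u)
    (n : ℝ) (hn : n = ∫ u, f u) (hnpos : 0 < n)
    (j : Fin 3 → ℝ)
    (hj : ∀ i, j i = ∫ u, (c * u i / Real.sqrt (c ^ 2 + ∑ k, u k ^ 2)) * f u)
    (β : (Fin 3 → ℝ) → ℝ)
    (hβ : ∀ u, β u = c⁻¹ ^ 2 *
      (c * n * Real.sqrt (c ^ 2 + ∑ k, u k ^ 2) - ∑ i, j i * u i))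
    (hint : Integrable fun u => c * f u / (β u * Real.sqrt (c ^ 2 + ∑ k, u k ^ 2)))
    (Φ : ℝ)
    (hΦ : Φ = (c ^ 2 * μ / 3) *
      (1 - ∫ u, c * f u / (β u * Real.sqrt (c ^ 2 + ∑ k, u k ^ 2)))) :
    0 ≤ Φ ∧ Φ ≤ c ^ 2 * μ / 3 := by
  have hc2 : (0:ℝ) < c ^ 2 := by positivity
  have hQ : ∀ u : Fin 3 → ℝ, 0 ≤ ∑ k, u k ^ 2 :=
    fun u => Finset.sum_nonneg fun k _ => sq_nonneg _
  set s : (Fin 3 → ℝ) → ℝ := fun u => Real.sqrt (c ^ 2 + ∑ k, u k ^ 2) with hs_def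
  have hs_pos : ∀ u, 0 < s u := fun u => Real.sqrt_pos.2 (by have := hQ u; positivity)
  have hs_sq : ∀ u, s u ^ 2 = c ^ 2 + ∑ k, u k ^ 2 :=
    fun u => Real.sq_sqrt (by have := hQ u; positivity)
  set w : (Fin 3 → ℝ) → Fin 3 → ℝ := fun u i => c * u i / s u with hw_def
  have hW_eq : ∀ u, ∑ i, (w u i) ^ 2 = c ^ 2 * (∑ k, u k ^ 2) / (s u) ^ 2 := by
    intro u
    rw [Finset.mul_sum, Finset.sum_div]
    refine Finset.sum_congr rfl fun i _ => ?_
    simp only [hw_def]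
    rw [div_pow, mul_pow]
  have hW_nonneg : ∀ u, 0 ≤ ∑ i, (w u i) ^ 2 :=
    fun u => Finset.sum_nonneg fun i _ => sq_nonneg _
  have hW_lt : ∀ u, ∑ i, (w u i) ^ 2 < c ^ 2 := by
    intro u
    rw [hW_eq u, div_lt_iff₀ (by positivity)]
    nlinarith [hs_sq u, hQ u, hc2]
  have hw_abs : ∀ u i, |w u i| ≤ c := by
    intro u i
    have h1 : (w u i) ^ 2 ≤ ∑ k, (w u k) ^ 2 :=
      Finset.single_le_sum (f := fun k => (w u k) ^ 2) (fun k _ => sq_nonneg _)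
        (Finset.mem_univ i)
    have h2 := hW_lt u
    have h3 := abs_nonneg (w u i)
    nlinarith [sq_abs (w u i)]
  have hw_cont : ∀ i, Continuous fun u : Fin 3 → ℝ => w u i := by
    intro i
    simp only [hw_def]
    apply Continuous.div
    · exact continuous_const.mul (continuous_apply i)
    · exact Real.continuous_sqrt.comp (by continuity)
    · exact fun u => (hs_pos u).ne'
  have hwint : ∀ i, Integrable fun u => w u i * f u := by
    intro i
    refine Integrable.mono' (hf.const_mul c) (((hw_cont i).aestronglyMeasurable).mul
      hf.aestronglyMeasurable) (Filter.Eventually.of_forall fun u => ?_)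
    rw [Real.norm_eq_abs, abs_mul, abs_of_nonneg (hf0 u)]
    exact mul_le_mul_of_nonneg_right (hw_abs u i) (hf0 u)
  have hj' : ∀ i, j i = ∫ u, w u i * f u := hj
  set m : Fin 3 → ℝ := fun i => j i / n with hm_def
  set S : ℝ := ∑ i, m i ^ 2 with hS_def
  have hjm : ∀ i, j i = n * m i := by
    intro i; simp only [hm_def]; field_simp
  have hS_nonneg : 0 ≤ S := Finset.sum_nonneg fun i _ => sq_nonneg _
  have hCS : ∀ u, (∑ i, m i * w u i) ^ 2 ≤ S * (∑ i, (w u i) ^ 2) :=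
    fun u => Finset.sum_mul_sq_le_sq_mul_sq _ _ _
  have heqP : (fun u => (∑ i, m i * w u i) * f u)
      = fun u => ∑ i, m i * (w u i * f u) := by
    funext u
    rw [Finset.sum_mul]
    exact Finset.sum_congr rfl fun i _ => by ring
  have hPf_int : Integrable fun u => (∑ i, m i * w u i) * f u := by
    rw [heqP]
    exact integrable_finset_sum _ fun i _ => (hwint i).const_mul (m i)
  have hPf : ∫ u, (∑ i, m i * w u i) * f u = n * S := by
    rw [heqP, integral_finset_sum _ fun i _ => (hwint i).const_mul (m i)]
    have hterm : ∀ i, ∫ u, m i * (w u i * f u) = m i * (n * m i) := by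
      intro i
      rw [integral_const_mul, ← hj' i, hjm i]
    rw [Finset.sum_congr rfl fun i _ => hterm i]
    simp only [hS_def, Finset.mul_sum]
    exact Finset.sum_congr rfl fun i _ => by ring
  have hS_lt : S < c ^ 2 := by
    rcases eq_or_lt_of_le hS_nonneg with h0 | hSpos
    · rw [← h0]; exact hc2
    · set r : ℝ := Real.sqrt S with hr_def
      have hr_pos : 0 < r := Real.sqrt_pos.2 hSpos
      have hr2 : r ^ 2 = S := Real.sq_sqrt hS_nonneg
      have hpt : ∀ u, (∑ i, m i * w u i) < r * c := by
        intro u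
        have h1 := hCS u
        have h2 := hW_lt u
        nlinarith [mul_pos hr_pos hc, hW_nonneg u, mul_lt_mul_of_pos_left h2 hSpos]
      have heqg : (fun u => (r * c - ∑ i, m i * w u i) * f u)
          = fun u => (r * c) * f u - (∑ i, m i * w u i) * f u := by
        funext u; ring
      have hg_int : Integrable fun u => (r * c - ∑ i, m i * w u i) * f u := by
        rw [heqg]
        exact (hf.const_mul (r * c)).sub hPf_int
      have hg_nn : 0 ≤ fun u => (r * c - ∑ i, m i * w u i) * f u :=
        fun u => mul_nonneg (by linarith [hpt u]) (hf0 u)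
      have hg_val : ∫ u, (r * c - ∑ i, m i * w u i) * f u = r * c * n - n * S := by
        rw [heqg, integral_sub (hf.const_mul (r * c)) hPf_int, integral_const_mul, ← hn, hPf]
      have hg_pos : 0 < ∫ u, (r * c - ∑ i, m i * w u i) * f u := by
        rcases lt_or_eq_of_le (integral_nonneg hg_nn) with h | h
        · exact h
        · exfalso
          have hzero := (integral_eq_zero_iff_of_nonneg hg_nn hg_int).1 h.symm
          have hfz : f =ᶠ[MeasureTheory.ae MeasureTheory.volume] 0 := by
            filter_upwards [hzero] with u hu
            have hu' : (r * c - ∑ i, m i * w u i) * f u = 0 := hu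
            have hfac : 0 < r * c - ∑ i, m i * w u i := by linarith [hpt u]
            rcases mul_eq_zero.1 hu' with h' | h'
            · exact absurd h' hfac.ne'
            · exact h'
          have hn0 : n = 0 := by
            rw [hn, integral_congr_ae hfz]
            simp
          linarith
      rw [hg_val] at hg_pos
      have h1 : S < r * c :=
        (mul_lt_mul_iff_right₀ hnpos).1 (show n * S < n * (r * c) by linarith)
      have h2 : r < c := by nlinarith [hr2, hr_pos]
      nlinarith [hr2, hr_pos, h2]
  have hD : ∀ u, ∑ i, m i * w u i < c ^ 2 := by
    intro u
    nlinarith [hCS u, hW_lt u, hW_nonneg u, hS_nonneg, hS_lt, hc2]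
  have hju : ∀ u, ∑ i, j i * u i = n * s u * (∑ i, m i * w u i) / c := by
    intro u
    have hterm : ∀ i, j i * u i = n * s u * (m i * w u i) / c := by
      intro i
      rw [hjm i]
      simp only [hw_def]
      have hsne := (hs_pos u).ne'
      field_simp
    rw [Finset.sum_congr rfl fun i _ => hterm i, ← Finset.sum_div, ← Finset.mul_sum]
  have hβ_eq : ∀ u, β u = n * s u * (c ^ 2 - ∑ i, m i * w u i) / c ^ 3 := by
    intro u
    rw [hβ u, hju u]
    field_simp
    ring
  have hβs : ∀ u, β u * s u
      = n * (c ^ 2 + ∑ k, u k ^ 2) * (c ^ 2 - ∑ i, m i * w u i) / c ^ 3 := by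
    intro u
    rw [hβ_eq u, div_mul_eq_mul_div]
    congr 1
    linear_combination (n * (c ^ 2 - ∑ i, m i * w u i)) * hs_sq u
  have hiden : ∀ u, c * f u / (β u * s u)
      = f u * (c ^ 2 - ∑ i, (w u i) ^ 2) / (n * (c ^ 2 - ∑ i, m i * w u i)) := by
    intro u
    have hP := hD u
    have hden1 : 0 < β u * s u := by
      rw [hβs u]
      exact div_pos (mul_pos (mul_pos hnpos (by have := hQ u; positivity))
        (sub_pos.2 hP)) (by positivity)
    have hden2 : 0 < n * (c ^ 2 - ∑ i, m i * w u i) := mul_pos hnpos (sub_pos.2 hP)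
    rw [div_eq_div_iff hden1.ne' hden2.ne', hβs u, hW_eq u]
    have hs2 := hs_sq u
    have hsne := (hs_pos u).ne'
    rw [hs2]
    field_simp
    ring
  have hnon : ∀ u, 0 ≤ c * f u / (β u * s u) := by
    intro u
    rw [hiden u]
    exact div_nonneg (mul_nonneg (hf0 u) (by linarith [hW_lt u]))
      (mul_pos hnpos (sub_pos.2 (hD u))).le
  have hle : ∀ u, c * f u / (β u * s u)
      ≤ f u * (c ^ 2 - ∑ i, m i * w u i) / (n * (c ^ 2 - S)) := by
    intro u
    rw [hiden u]
    have hP := hD u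
    have hsumsq : (0:ℝ) ≤ ∑ i, (m i - w u i) ^ 2 :=
      Finset.sum_nonneg fun i _ => sq_nonneg _
    have hexp : ∑ i, (m i - w u i) ^ 2
        = S + (∑ i, (w u i) ^ 2) - 2 * (∑ i, m i * w u i) := by
      have hterm : ∀ i, (m i - w u i) ^ 2
          = m i ^ 2 + (w u i) ^ 2 - 2 * (m i * w u i) := fun i => by ring
      rw [Finset.sum_congr rfl fun i _ => hterm i, Finset.sum_sub_distrib,
        Finset.sum_add_distrib, ← Finset.mul_sum, hS_def]
    have hkey : (c ^ 2 - S) * (c ^ 2 - ∑ i, (w u i) ^ 2)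
        ≤ (c ^ 2 - ∑ i, m i * w u i) ^ 2 := by
      nlinarith [mul_nonneg (by linarith : (0:ℝ) ≤ c ^ 2 - S)
        (by linarith [hexp, hsumsq] :
          (0:ℝ) ≤ S + (∑ i, (w u i) ^ 2) - 2 * (∑ i, m i * w u i)),
        sq_nonneg (S - ∑ i, m i * w u i)]
    rw [div_le_div_iff₀ (mul_pos hnpos (sub_pos.2 hP))
      (mul_pos hnpos (by linarith : (0:ℝ) < c ^ 2 - S))]
    nlinarith [mul_le_mul_of_nonneg_left hkey (mul_nonneg hnpos.le (hf0 u))]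
  have hn0 : n ≠ 0 := hnpos.ne'
  have hA0 : c ^ 2 - S ≠ 0 := by intro h; linarith
  have heqR : (fun u => f u * (c ^ 2 - ∑ i, m i * w u i) / (n * (c ^ 2 - S)))
      = fun u => (c ^ 2 * f u - (∑ i, m i * w u i) * f u) * (n * (c ^ 2 - S))⁻¹ := by
    funext u; ring
  have hRHS_int : Integrable fun u =>
      f u * (c ^ 2 - ∑ i, m i * w u i) / (n * (c ^ 2 - S)) := by
    rw [heqR]
    exact ((hf.const_mul (c ^ 2)).sub hPf_int).mul_const _
  have hRHS_val : (∫ u, f u * (c ^ 2 - ∑ i, m i * w u i) / (n * (c ^ 2 - S))) = 1 := by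
    rw [heqR, integral_mul_const,
      integral_sub (hf.const_mul (c ^ 2)) hPf_int, integral_const_mul, ← hn, hPf]
    field_simp
  have hint_le : (∫ u, c * f u / (β u * s u)) ≤ 1 := by
    calc (∫ u, c * f u / (β u * s u))
        ≤ ∫ u, f u * (c ^ 2 - ∑ i, m i * w u i) / (n * (c ^ 2 - S)) :=
          integral_mono hint hRHS_int hle
      _ = 1 := hRHS_val
  have hint_nn : 0 ≤ ∫ u, c * f u / (β u * s u) := integral_nonneg hnon
  constructor
  · rw [hΦ]
    have hK : (0:ℝ) ≤ c ^ 2 * μ / 3 := by positivity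
    have h1 : (0:ℝ) ≤ 1 - ∫ u, c * f u / (β u * s u) := by linarith
    exact mul_nonneg hK h1
  · rw [hΦ]
    have hK : (0:ℝ) < c ^ 2 * μ / 3 := by positivity
    nlinarith [hint_nn]
end

section
/- The centered relativistic equilibrium density converges pointwise to the Maxwellian as c → ∞: for fixed σ, μ > 0 and u ∈ ℝ³, with λ = c²μ/(2σ), one has c⁻³ Z(λ) · (√(1 + |u|²/c²))^{-2λ} → (μ/(2πσ))^{3/2} exp(-μ|u|²/(2σ)) as c → ∞, where Z(λ) = Γ(λ)/(π^{3/2}Γ(λ - 3/2)). -/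
open Finset Real Filter
open Topology

lemma tendsto_ratio_add (a b : ℝ) : Tendsto (fun x : ℝ => (x + a) / (x + b)) atTop (𝓝 1) := by
  have h1 : Tendsto (fun x : ℝ => 1 + a * x⁻¹) atTop (𝓝 1) := by
    simpa using (tendsto_inv_atTop_zero.const_mul a).const_add 1
  have h2 : Tendsto (fun x : ℝ => 1 + b * x⁻¹) atTop (𝓝 1) := by
    simpa using (tendsto_inv_atTop_zero.const_mul b).const_add 1
  have := h1.div h2 one_ne_zero
  simp only [div_one] at this
  refine this.congr' ?_
  filter_upwards [eventually_gt_atTop (max 0 (-b))] with x hx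
  have hx0 : x ≠ 0 := by
    have := lt_of_le_of_lt (le_max_left 0 (-b)) hx; linarith
  have hxb : x + b ≠ 0 := by
    have := lt_of_le_of_lt (le_max_right 0 (-b)) hx; intro h; nlinarith
  simp only [Pi.div_apply]
  field_simp

lemma rpow_half_mul_self {y : ℝ} (hy : 0 < y) : y ^ ((1:ℝ)/2) * y ^ ((1:ℝ)/2) = y := by
  rw [← Real.rpow_add hy]; norm_num

lemma wendel_half :
    Tendsto (fun x : ℝ => Gamma (x + 1/2) / (Gamma x * x ^ ((1:ℝ)/2))) atTop (𝓝 1) := by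
  have hL : Tendsto (fun x : ℝ => (x / (x + 1/2)) ^ ((1:ℝ)/2)) atTop (𝓝 1) := by
    have := (tendsto_ratio_add 0 (1/2)).rpow_const (p := (1:ℝ)/2) (Or.inr (by norm_num))
    simpa using this
  refine tendsto_of_tendsto_of_tendsto_of_le_of_le' hL tendsto_const_nhds ?_ ?_
  · filter_upwards [eventually_gt_atTop (0:ℝ)] with x hx
    have hΓx : 0 < Gamma x := Gamma_pos_of_pos hx
    have hΓh : 0 < Gamma (x + 1/2) := Gamma_pos_of_pos (by linarith)
    have hx2 : (0:ℝ) < x + 1/2 := by linarith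
    have h := Gamma_mul_add_mul_le_rpow_Gamma_mul_rpow_Gamma (s := x + 1/2) (t := x + 3/2)
      (a := 1/2) (b := 1/2) (by linarith) (by linarith) (by norm_num) (by norm_num) (by norm_num)
    have harg : (1/2 : ℝ) * (x + 1/2) + (1/2) * (x + 3/2) = x + 1 := by ring
    rw [harg] at h
    have h32 : Gamma (x + 3/2) = (x + 1/2) * Gamma (x + 1/2) := by
      have := Gamma_add_one (s := x + 1/2) (by positivity)
      rw [← this]; ring_nf
    rw [Gamma_add_one hx.ne', h32, mul_rpow hx2.le hΓh.le] at h
    -- h : x * Gamma x ≤ Gamma (x+1/2) ^ (1/2) * ((x+1/2)^(1/2) * Gamma (x+1/2)^(1/2))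
    have h' : x * Gamma x ≤ Gamma (x + 1/2) * (x + 1/2) ^ ((1:ℝ)/2) := by
      calc x * Gamma x ≤ Gamma (x+1/2) ^ ((1:ℝ)/2) * ((x+1/2) ^ ((1:ℝ)/2) * Gamma (x+1/2) ^ ((1:ℝ)/2)) := h
        _ = (Gamma (x+1/2) ^ ((1:ℝ)/2) * Gamma (x+1/2) ^ ((1:ℝ)/2)) * (x+1/2) ^ ((1:ℝ)/2) := by ring
        _ = Gamma (x + 1/2) * (x + 1/2) ^ ((1:ℝ)/2) := by rw [rpow_half_mul_self hΓh]
    rw [le_div_iff₀ (by positivity)]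
    rw [div_rpow hx.le hx2.le]
    rw [div_mul_eq_mul_div, div_le_iff₀ (by positivity)]
    calc x ^ ((1:ℝ)/2) * (Gamma x * x ^ ((1:ℝ)/2)) = (x ^ ((1:ℝ)/2) * x ^ ((1:ℝ)/2)) * Gamma x := by ring
      _ = x * Gamma x := by rw [rpow_half_mul_self hx]
      _ ≤ Gamma (x + 1/2) * (x + 1/2) ^ ((1:ℝ)/2) := h'
  · filter_upwards [eventually_gt_atTop (0:ℝ)] with x hx
    have hΓx : 0 < Gamma x := Gamma_pos_of_pos hx
    have h := Gamma_mul_add_mul_le_rpow_Gamma_mul_rpow_Gamma (s := x) (t := x + 1)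
      (a := 1/2) (b := 1/2) hx (by linarith) (by norm_num) (by norm_num) (by norm_num)
    have harg : (1/2 : ℝ) * x + (1/2) * (x + 1) = x + 1/2 := by ring
    rw [harg, Gamma_add_one hx.ne', mul_rpow hx.le hΓx.le] at h
    rw [div_le_one (by positivity)]
    calc Gamma (x + 1/2) ≤ Gamma x ^ ((1:ℝ)/2) * (x ^ ((1:ℝ)/2) * Gamma x ^ ((1:ℝ)/2)) := h
      _ = (Gamma x ^ ((1:ℝ)/2) * Gamma x ^ ((1:ℝ)/2)) * x ^ ((1:ℝ)/2) := by ring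
      _ = Gamma x * x ^ ((1:ℝ)/2) := by rw [rpow_half_mul_self hΓx]

lemma ratio32 :
    Tendsto (fun x : ℝ => Gamma x / (Gamma (x - 3/2) * x ^ ((3:ℝ)/2))) atTop (𝓝 1) := by
  have hW : Tendsto (fun x : ℝ =>
      Gamma ((x - 3/2) + 1/2) / (Gamma (x - 3/2) * (x - 3/2) ^ ((1:ℝ)/2))) atTop (𝓝 1) := by
    have := wendel_half.comp (tendsto_atTop_add_const_right atTop (-(3/2) : ℝ) tendsto_id)
    refine this.congr fun x => ?_
    simp only [Function.comp_apply, id_eq]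
    ring_nf
  have hT : Tendsto (fun x : ℝ => (x - 1)/x * ((x - 3/2)/x) ^ ((1:ℝ)/2)) atTop (𝓝 1) := by
    have h1 := tendsto_ratio_add (-1) 0
    have h2 := (tendsto_ratio_add (-(3/2)) 0).rpow_const (p := (1:ℝ)/2) (Or.inl one_ne_zero)
    have h3 := h1.mul h2
    norm_num at h3
    refine h3.congr fun x => ?_
    norm_num [sub_eq_add_neg]
  have hM := hW.mul hT
  rw [one_mul] at hM
  refine hM.congr' ?_
  filter_upwards [eventually_gt_atTop (2:ℝ)] with x hx
  have hy : (0:ℝ) < x - 3/2 := by linarith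
  have hx0 : (0:ℝ) < x := by linarith
  have hΓy : 0 < Gamma (x - 3/2) := Gamma_pos_of_pos hy
  have hΓx1 : Gamma x = (x - 1) * Gamma (x - 1) := by
    have h := Gamma_add_one (s := x - 1) (by intro h; rw [sub_eq_zero] at h; linarith)
    have e : x - 1 + 1 = x := by ring
    rw [e] at h
    exact h
  have h1 : x - 1 = (x - 3/2) + 1/2 := by ring
  have hx32 : x ^ ((3:ℝ)/2) = x * x ^ ((1:ℝ)/2) := by
    have e : (3:ℝ)/2 = 1 + 1/2 := by norm_num
    rw [e, Real.rpow_add hx0, Real.rpow_one]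
  have hry : (0:ℝ) < (x - 3/2) ^ ((1:ℝ)/2) := rpow_pos_of_pos hy _
  have hrx : (0:ℝ) < x ^ ((1:ℝ)/2) := rpow_pos_of_pos hx0 _
  rw [← h1, hΓx1, div_rpow hy.le hx0.le, hx32]
  have key : Gamma (x-1) / (Gamma (x-3/2) * (x-3/2) ^ ((1:ℝ)/2)) *
      ((x-1)/x * ((x-3/2) ^ ((1:ℝ)/2) / x ^ ((1:ℝ)/2))) =
      ((x-1) * Gamma (x-1) / (Gamma (x-3/2) * (x * x ^ ((1:ℝ)/2)))) *
      ((x-3/2) ^ ((1:ℝ)/2) / (x-3/2) ^ ((1:ℝ)/2)) := by ring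
  rw [key, div_self hry.ne', mul_one]

theorem equilibrium_newtonian_limit (σ μ : ℝ) (hσ : 0 < σ) (hμ : 0 < μ)
    (u : Fin 3 → ℝ) :
    Tendsto (fun c : ℝ =>
        c⁻¹ ^ 3 * (Real.Gamma (c ^ 2 * μ / (2 * σ)) /
            (Real.pi ^ ((3 : ℝ) / 2) * Real.Gamma (c ^ 2 * μ / (2 * σ) - 3 / 2))) *
          (Real.sqrt (1 + (∑ i, u i ^ 2) / c ^ 2)) ^ (-(2 * (c ^ 2 * μ / (2 * σ)))))
      atTop
      (nhds ((μ / (2 * Real.pi * σ)) ^ ((3 : ℝ) / 2) *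
        Real.exp (-μ * (∑ i, u i ^ 2) / (2 * σ)))) := by
  have ha : (0:ℝ) ≤ ∑ i, u i ^ 2 := Finset.sum_nonneg fun i _ => sq_nonneg _
  set a : ℝ := ∑ i, u i ^ 2 with hadef
  have hk : (0:ℝ) < μ / (2*σ) := by positivity
  have hlam : Tendsto (fun c : ℝ => c ^ 2 * μ / (2 * σ)) atTop atTop := by
    have hpow : Tendsto (fun x : ℝ => x ^ 2) atTop atTop := tendsto_pow_atTop two_ne_zero
    refine (hpow.atTop_mul_const hk).congr fun c => ?_
    ring
  have T1 : Tendsto (fun c : ℝ => Gamma (c ^ 2 * μ / (2 * σ)) /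
      (Gamma (c ^ 2 * μ / (2 * σ) - 3/2) * (c ^ 2 * μ / (2 * σ)) ^ ((3:ℝ)/2)))
      atTop (𝓝 1) := by
    simpa [Function.comp_def] using ratio32.comp hlam
  have T2 : Tendsto (fun c : ℝ => (1 + a / c ^ 2) ^ ((c:ℝ) ^ 2)) atTop (𝓝 (Real.exp a)) := by
    have := (tendsto_one_add_div_rpow_exp a).comp
      (tendsto_pow_atTop (two_ne_zero) (α := ℝ))
    simpa [Function.comp_def] using this
  have T3 : Tendsto (fun c : ℝ => ((1 + a / c ^ 2) ^ ((c:ℝ) ^ 2)) ^ (-(μ/(2*σ))))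
      atTop (𝓝 (Real.exp a ^ (-(μ/(2*σ))))) :=
    T2.rpow_const (Or.inl (Real.exp_pos a).ne')
  have TT := (T1.mul_const ((μ/(2*σ)) ^ ((3:ℝ)/2) / Real.pi ^ ((3:ℝ)/2))).mul T3
  rw [one_mul] at TT
  have hval : (μ/(2*σ)) ^ ((3:ℝ)/2) / Real.pi ^ ((3:ℝ)/2) * Real.exp a ^ (-(μ/(2*σ)))
      = (μ / (2 * Real.pi * σ)) ^ ((3:ℝ)/2) * Real.exp (-μ * a / (2*σ)) := by
    have e0 : μ / (2 * Real.pi * σ) = (μ/(2*σ))/Real.pi := by ring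
    have e1 : ((μ/(2*σ))/Real.pi) ^ ((3:ℝ)/2)
        = (μ/(2*σ)) ^ ((3:ℝ)/2) / Real.pi ^ ((3:ℝ)/2) :=
      Real.div_rpow hk.le Real.pi_pos.le _
    have e2 : Real.exp a ^ (-(μ/(2*σ))) = Real.exp (-μ * a / (2*σ)) := by
      rw [Real.rpow_def_of_pos (Real.exp_pos a), Real.log_exp]
      congr 1
      ring
    rw [e0, e1, e2]
  rw [hval] at TT
  refine TT.congr' ?_
  filter_upwards [eventually_gt_atTop (0:ℝ),
    hlam.eventually (eventually_gt_atTop (2:ℝ))] with c hc hc2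
  have hΓ : 0 < Gamma (c ^ 2 * μ / (2 * σ) - 3/2) := Gamma_pos_of_pos (by linarith)
  have hb : (0:ℝ) < 1 + a / c ^ 2 := by positivity
  have hlam32 : (c ^ 2 * μ / (2 * σ)) ^ ((3:ℝ)/2) = c ^ 3 * (μ/(2*σ)) ^ ((3:ℝ)/2) := by
    have e : c ^ 2 * μ / (2 * σ) = c ^ 2 * (μ/(2*σ)) := by ring
    rw [e, Real.mul_rpow (by positivity) hk.le]
    congr 1
    rw [← Real.rpow_natCast c 2, ← Real.rpow_mul hc.le]
    rw [show ((2:ℕ):ℝ) * ((3:ℝ)/2) = ((3:ℕ):ℝ) by norm_num, Real.rpow_natCast]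
  have hsq : Real.sqrt (1 + a / c ^ 2) ^ (-(2 * (c ^ 2 * μ / (2 * σ))))
      = ((1 + a / c ^ 2) ^ ((c:ℝ) ^ 2)) ^ (-(μ/(2*σ))) := by
    rw [Real.sqrt_eq_rpow, ← Real.rpow_mul hb.le, ← Real.rpow_mul hb.le]
    congr 1
    ring
  rw [hsq, hlam32]
  have hK' : (0:ℝ) < (μ/(2*σ)) ^ ((3:ℝ)/2) := rpow_pos_of_pos hk _
  have hP : (0:ℝ) < Real.pi ^ ((3:ℝ)/2) := rpow_pos_of_pos Real.pi_pos _
  have key : Gamma (c ^ 2 * μ / (2 * σ)) /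
      (Gamma (c ^ 2 * μ / (2 * σ) - 3/2) * (c ^ 3 * (μ/(2*σ)) ^ ((3:ℝ)/2))) *
      ((μ/(2*σ)) ^ ((3:ℝ)/2) / Real.pi ^ ((3:ℝ)/2)) *
      ((1 + a / c ^ 2) ^ ((c:ℝ) ^ 2)) ^ (-(μ/(2*σ)))
      = (c⁻¹ ^ 3 * (Gamma (c ^ 2 * μ / (2 * σ)) /
          (Real.pi ^ ((3:ℝ)/2) * Gamma (c ^ 2 * μ / (2 * σ) - 3/2))) *
        ((1 + a / c ^ 2) ^ ((c:ℝ) ^ 2)) ^ (-(μ/(2*σ)))) *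
        ((μ/(2*σ)) ^ ((3:ℝ)/2) / (μ/(2*σ)) ^ ((3:ℝ)/2)) := by
    ring
  rw [key, div_self hK'.ne', mul_one]
end
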